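/- Let q ∈ {1, 2, 3} and let M be the q×q adjacency matrix of the cycle graph C_q with both directions counted (so for q=3, M has 0 on the diagonal and 1 off-diagonal; for q=2, M has off-diagonal entries 2; for q=1, M = (2)). Then the only diagonal matrix D over ℂ such that M and M+D have the same characteristic polynomial is D = 0. Concretely, for q=3 the ideal of spectral invariants in ℂ[v_1,v_2,v_3] is (e_1, e_2, e_3 − e_1), which vanishes only at the origin. -/
import Mathlib


open Matrix MvPolynomial

/-- The Floquet matrix at `z = 1` for the discrete Laplacian with period
`q ∈ {1,2,3}`: for `q = 3` it is the adjacency matrix of the `3`-cycle (zero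
diagonal, off-diagonal entries `1`); for `q = 2` the off-diagonal entries are `2`
(doubled edges); for `q = 1` it is the `1 × 1` matrix `(2)`. -/
def smallCycleMatrix (q : ℕ) : Matrix (Fin q) (Fin q) ℂ :=
  Matrix.of fun i j =>
    if i = j then (if q = 1 then 2 else 0) else (if q = 2 then 2 else 1)

/-- The `i`-th spectral invariant `S_i = C_i(v) - C_i(0)` of `A`, where
`det(A + D - λI) = ∑_{i=0}^n C_i(v)(-λ)^{n-i}` and `D = diag(v_1,…,v_n)`. -/
noncomputable def spectralInvariant {n : ℕ} (A : Matrix (Fin n) (Fin n) ℂ) (i : ℕ) :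
    MvPolynomial (Fin n) ℂ :=
  (-1 : MvPolynomial (Fin n) ℂ) ^ i *
    (((A.map MvPolynomial.C + Matrix.diagonal fun j => MvPolynomial.X j).charpoly).coeff (n - i)
      - MvPolynomial.C (A.charpoly.coeff (n - i)))

section Aux

open Polynomial

lemma cp3aux {R : Type*} [CommRing R] (v : Fin 3 → R) (e : R) :
    (Matrix.of fun i j : Fin 3 => if i = j then v i else e).charpoly
      = Polynomial.X ^ 3 - Polynomial.C (v 0 + v 1 + v 2) * Polynomial.X ^ 2
        + Polynomial.C (v 0 * v 1 + v 0 * v 2 + v 1 * v 2 - 3 * e ^ 2) * Polynomial.X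
        - Polynomial.C (v 0 * v 1 * v 2 - e ^ 2 * (v 0 + v 1 + v 2) + 2 * e ^ 3) := by
  simp [Matrix.charpoly, Matrix.det_fin_three, charmatrix_apply, Matrix.diagonal, map_ofNat]
  ring

lemma cp2aux {R : Type*} [CommRing R] (v : Fin 2 → R) (e : R) :
    (Matrix.of fun i j : Fin 2 => if i = j then v i else e).charpoly
      = Polynomial.X ^ 2 - Polynomial.C (v 0 + v 1) * Polynomial.X
        + Polynomial.C (v 0 * v 1 - e ^ 2) := by
  simp [Matrix.charpoly, Matrix.det_fin_two, charmatrix_apply, Matrix.diagonal, map_ofNat]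
  ring

lemma cp1aux {R : Type*} [CommRing R] (a : R) :
    (Matrix.of fun _ _ : Fin 1 => a).charpoly = Polynomial.X - Polynomial.C a := by
  simp [Matrix.charpoly, Matrix.det_fin_one, charmatrix_apply]

lemma coeff3_2 {R : Type*} [CommRing R] (a b c : R) :
    (Polynomial.X ^ 3 - Polynomial.C a * Polynomial.X ^ 2 + Polynomial.C b * Polynomial.X
      - Polynomial.C c).coeff 2 = -a := by
  simp [Polynomial.coeff_X_pow]

lemma coeff3_1 {R : Type*} [CommRing R] (a b c : R) :
    (Polynomial.X ^ 3 - Polynomial.C a * Polynomial.X ^ 2 + Polynomial.C b * Polynomial.X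
      - Polynomial.C c).coeff 1 = b := by
  simp [Polynomial.coeff_X_pow]

lemma coeff3_0 {R : Type*} [CommRing R] (a b c : R) :
    (Polynomial.X ^ 3 - Polynomial.C a * Polynomial.X ^ 2 + Polynomial.C b * Polynomial.X
      - Polynomial.C c).coeff 0 = -c := by
  simp [Polynomial.coeff_X_pow]

lemma coeffs_eq3 {R : Type*} [CommRing R] {a b c a' b' c' : R}
    (h : Polynomial.X ^ 3 - Polynomial.C a * Polynomial.X ^ 2
          + Polynomial.C b * Polynomial.X - Polynomial.C c
        = Polynomial.X ^ 3 - Polynomial.C a' * Polynomial.X ^ 2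
          + Polynomial.C b' * Polynomial.X - Polynomial.C c') :
    a = a' ∧ b = b' ∧ c = c' := by
  refine ⟨?_, ?_, ?_⟩
  · have := congrArg (fun p => Polynomial.coeff p 2) h
    simpa [coeff3_2] using this
  · have := congrArg (fun p => Polynomial.coeff p 1) h
    simpa [coeff3_1] using this
  · have := congrArg (fun p => Polynomial.coeff p 0) h
    simpa [coeff3_0] using this

lemma coeffs_eq2 {R : Type*} [CommRing R] {a b a' b' : R}
    (h : Polynomial.X ^ 2 - Polynomial.C a * Polynomial.X + Polynomial.C b
        = Polynomial.X ^ 2 - Polynomial.C a' * Polynomial.X + Polynomial.C b') :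
    a = a' ∧ b = b' := by
  constructor
  · have := congrArg (fun p => Polynomial.coeff p 1) h
    simpa [Polynomial.coeff_X_pow] using this
  · have := congrArg (fun p => Polynomial.coeff p 0) h
    simpa [Polynomial.coeff_X_pow] using this

lemma es1 : MvPolynomial.esymm (Fin 3) ℂ 1 = X 0 + X 1 + X 2 := by
  have p1 : Finset.powersetCard 1 (Finset.univ : Finset (Fin 3)) = {{0},{1},{2}} := by decide
  rw [MvPolynomial.esymm, p1]
  rw [show ({{0},{1},{2}} : Finset (Finset (Fin 3))) = insert {0} (insert {1} {{2}}) from rfl]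
  rw [Finset.sum_insert (by decide), Finset.sum_insert (by decide), Finset.sum_singleton]
  simp
  ring

lemma es2 : MvPolynomial.esymm (Fin 3) ℂ 2 = X 0 * X 1 + X 0 * X 2 + X 1 * X 2 := by
  have p2 : Finset.powersetCard 2 (Finset.univ : Finset (Fin 3)) = {{0,1},{0,2},{1,2}} := by
    decide
  rw [MvPolynomial.esymm, p2]
  rw [show ({{0,1},{0,2},{1,2}} : Finset (Finset (Fin 3)))
      = insert {0,1} (insert {0,2} {{1,2}}) from rfl]
  rw [Finset.sum_insert (by decide), Finset.sum_insert (by decide), Finset.sum_singleton]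
  rw [show ({0,1} : Finset (Fin 3)) = insert 0 {1} from rfl,
      show ({0,2} : Finset (Fin 3)) = insert 0 {2} from rfl,
      show ({1,2} : Finset (Fin 3)) = insert 1 {2} from rfl]
  rw [Finset.prod_insert (by decide), Finset.prod_insert (by decide),
      Finset.prod_insert (by decide)]
  simp
  ring

lemma es3 : MvPolynomial.esymm (Fin 3) ℂ 3 = X 0 * X 1 * X 2 := by
  have p3 : Finset.powersetCard 3 (Finset.univ : Finset (Fin 3)) = {{0,1,2}} := by decide
  rw [MvPolynomial.esymm, p3, Finset.sum_singleton]
  rw [show ({0,1,2} : Finset (Fin 3)) = insert 0 (insert 1 {2}) from rfl]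
  rw [Finset.prod_insert (by decide), Finset.prod_insert (by decide), Finset.prod_singleton,
    mul_assoc]

lemma smallCycle3_eq :
    smallCycleMatrix 3 = Matrix.of fun i j : Fin 3 => if i = j then (fun _ => (0:ℂ)) i else 1 := by
  ext i j
  by_cases h : i = j <;> simp [smallCycleMatrix, h]

lemma smallCycle3_mv :
    (smallCycleMatrix 3).map MvPolynomial.C + Matrix.diagonal (fun j => MvPolynomial.X j)
      = Matrix.of fun i j : Fin 3 =>
          if i = j then MvPolynomial.X i else (1 : MvPolynomial (Fin 3) ℂ) := by
  ext i j
  by_cases h : i = j <;> simp [smallCycleMatrix, Matrix.diagonal, h]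

lemma spec_vals :
    spectralInvariant (smallCycleMatrix 3) 1 = MvPolynomial.esymm (Fin 3) ℂ 1 ∧
    spectralInvariant (smallCycleMatrix 3) 2 = MvPolynomial.esymm (Fin 3) ℂ 2 ∧
    spectralInvariant (smallCycleMatrix 3) 3
      = MvPolynomial.esymm (Fin 3) ℂ 3 - MvPolynomial.esymm (Fin 3) ℂ 1 := by
  have h1 := cp3aux (R := MvPolynomial (Fin 3) ℂ) (fun j => MvPolynomial.X j) 1
  have h0 := cp3aux (R := ℂ) (fun _ => 0) 1
  rw [← smallCycle3_mv] at h1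
  rw [← smallCycle3_eq] at h0
  refine ⟨?_, ?_, ?_⟩ <;>
    rw [spectralInvariant, h1, h0] <;>
    simp only [Nat.reduceSub, coeff3_2, coeff3_1, coeff3_0, es1, es2, es3] <;>
    norm_num [map_neg, map_ofNat] <;> ring

lemma cube_zero {a b c : ℂ} (h1 : a + b + c = 0) (h2 : a * b + a * c + b * c = 0)
    (h3 : a * b * c = 0) : a = 0 ∧ b = 0 ∧ c = 0 := by
  have ha : a ^ 3 = 0 := by linear_combination a ^ 2 * h1 - a * h2 + h3
  have hb : b ^ 3 = 0 := by linear_combination b ^ 2 * h1 - b * h2 + h3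
  have hc : c ^ 3 = 0 := by linear_combination c ^ 2 * h1 - c * h2 + h3
  exact ⟨by simpa using pow_eq_zero_iff (n := 3) (by norm_num) |>.mp ha,
    by simpa using pow_eq_zero_iff (n := 3) (by norm_num) |>.mp hb,
    by simpa using pow_eq_zero_iff (n := 3) (by norm_num) |>.mp hc⟩

end Aux

/-- For `q ∈ {1,2,3}`, the only diagonal matrix `D` with `M` and `M + D` having
the same characteristic polynomial is `D = 0`.  Concretely, for `q = 3` the ideal
of spectral invariants in `ℂ[v_1,v_2,v_3]` is `(e_1, e_2, e_3 − e_1)`, and it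
vanishes only at the origin. -/
theorem smallCycle_spectrally_rigid (q : ℕ) (hq : q = 1 ∨ q = 2 ∨ q = 3) :
    (∀ d : Fin q → ℂ,
        (smallCycleMatrix q + Matrix.diagonal d).charpoly = (smallCycleMatrix q).charpoly →
        d = 0) ∧
      Ideal.span (Set.range fun i : Fin 3 => spectralInvariant (smallCycleMatrix 3) ((i : ℕ) + 1)) =
        Ideal.span {MvPolynomial.esymm (Fin 3) ℂ 1, MvPolynomial.esymm (Fin 3) ℂ 2,
          MvPolynomial.esymm (Fin 3) ℂ 3 - MvPolynomial.esymm (Fin 3) ℂ 1} ∧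
      ∀ v : Fin 3 → ℂ,
        MvPolynomial.eval v (MvPolynomial.esymm (Fin 3) ℂ 1) = 0 →
        MvPolynomial.eval v (MvPolynomial.esymm (Fin 3) ℂ 2) = 0 →
        MvPolynomial.eval v
          (MvPolynomial.esymm (Fin 3) ℂ 3 - MvPolynomial.esymm (Fin 3) ℂ 1) = 0 →
        v = 0 := by
  obtain ⟨s1, s2, s3⟩ := spec_vals
  refine ⟨?_, ?_, ?_⟩
  · -- rigidity
    intro d hd
    rcases hq with rfl | rfl | rfl
    · -- q = 1
      have e1 : smallCycleMatrix 1 + Matrix.diagonal d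
          = Matrix.of fun _ _ : Fin 1 => (2 + d 0 : ℂ) := by
        ext i j
        fin_cases i <;> fin_cases j <;> simp [smallCycleMatrix, Matrix.diagonal]
      have e0 : smallCycleMatrix 1 = Matrix.of fun _ _ : Fin 1 => (2 : ℂ) := by
        ext i j
        fin_cases i <;> fin_cases j <;> simp [smallCycleMatrix]
      rw [e1, e0, cp1aux, cp1aux] at hd
      have h0 := congrArg (fun p => Polynomial.coeff p 0) hd
      simp at h0
      funext i
      fin_cases i
      simpa using h0
    · -- q = 2
      have e1 : smallCycleMatrix 2 + Matrix.diagonal d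
          = Matrix.of fun i j : Fin 2 => if i = j then d i else (2 : ℂ) := by
        ext i j
        by_cases h : i = j <;> simp [smallCycleMatrix, Matrix.diagonal, h]
      have e0 : smallCycleMatrix 2
          = Matrix.of fun i j : Fin 2 => if i = j then (fun _ => (0:ℂ)) i else (2 : ℂ) := by
        ext i j
        by_cases h : i = j <;> simp [smallCycleMatrix, h]
      rw [e1, e0, cp2aux, cp2aux] at hd
      obtain ⟨h1, h2⟩ := coeffs_eq2 hd
      simp only [add_zero, zero_mul, mul_zero, zero_add] at h1 h2
      have hsum : d 0 + d 1 = 0 := h1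
      have hprod : d 0 * d 1 = 0 := by linear_combination h2
      have h00 : d 0 = 0 := by
        have : d 0 ^ 2 = 0 := by linear_combination d 0 * hsum - hprod
        simpa using pow_eq_zero_iff (n := 2) (by norm_num) |>.mp this
      have h11 : d 1 = 0 := by linear_combination hsum - h00
      funext i
      fin_cases i
      · exact h00
      · exact h11
    · -- q = 3
      have e1 : smallCycleMatrix 3 + Matrix.diagonal d
          = Matrix.of fun i j : Fin 3 => if i = j then d i else (1 : ℂ) := by
        ext i j
        by_cases h : i = j <;> simp [smallCycleMatrix, Matrix.diagonal, h]
      rw [e1, smallCycle3_eq, cp3aux, cp3aux] at hd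
      obtain ⟨h1, h2, h3⟩ := coeffs_eq3 hd
      simp only [add_zero, zero_mul, mul_zero, zero_add, zero_sub, sub_zero] at h1 h2 h3
      have hs : d 0 + d 1 + d 2 = 0 := h1
      have hp2 : d 0 * d 1 + d 0 * d 2 + d 1 * d 2 = 0 := by linear_combination h2
      have hp3 : d 0 * d 1 * d 2 = 0 := by linear_combination h3 + hs
      obtain ⟨z0, z1, z2⟩ := cube_zero hs hp2 hp3
      funext i
      fin_cases i
      · exact z0
      · exact z1
      · exact z2
  · -- ideal equality
    have hr : (Set.range fun i : Fin 3 => spectralInvariant (smallCycleMatrix 3) ((i : ℕ) + 1))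
        = {MvPolynomial.esymm (Fin 3) ℂ 1, MvPolynomial.esymm (Fin 3) ℂ 2,
            MvPolynomial.esymm (Fin 3) ℂ 3 - MvPolynomial.esymm (Fin 3) ℂ 1} := by
      ext x
      constructor
      · rintro ⟨i, rfl⟩
        simp only [Set.mem_insert_iff, Set.mem_singleton_iff]
        fin_cases i
        · exact Or.inl (by simpa using s1)
        · exact Or.inr (Or.inl (by simpa using s2))
        · exact Or.inr (Or.inr (by simpa using s3))
      · rintro (rfl | rfl | rfl)
        · exact ⟨0, by simpa using s1⟩
        · exact ⟨1, by simpa using s2⟩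
        · exact ⟨2, by simpa using s3⟩
    rw [hr]
  · -- vanishing only at origin
    intro v h1 h2 h3
    rw [es1] at h1
    rw [es2] at h2
    rw [es3, es1] at h3
    simp only [map_sub, map_add, _root_.map_mul, MvPolynomial.eval_X] at h1 h2 h3
    have hp3 : v 0 * v 1 * v 2 = 0 := by linear_combination h3 + h1
    obtain ⟨z0, z1, z2⟩ := cube_zero h1 h2 hp3
    funext i
    fin_cases i
    · exact z0
    · exact z1
    · exact z2
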